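/- Let G be a locally compact Hausdorff group, μ_G a right Haar measure on G, and A, B compact subsets of G with B a neighborhood of the identity. Then for every k ∈ ℕ there exists a constant c > 0 such that for all n ∈ ℕ with n ≥ 1, μ_G(B^{n+k-1}A) ≤ c·μ_G(Bⁿ). -/

import Mathlib

open MeasureTheory Pointwise Topology
open scoped ENNReal NNReal

/-! Cover the compact set `B ^ k * A` by finitely many right translates `B * {x}`, `x ∈ t`.
Then `B ^ (n + k - 1) * A = B ^ (n - 1) * (B ^ k * A)` is covered by the translates
`B ^ n * {x}`, each of which has the measure of `B ^ n` by right invariance, so `c = #t + 1` works. -/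

theorem IsCompact.pow {M : Type*} [Monoid M] [TopologicalSpace M] [ContinuousMul M] {s : Set M}
    (hs : IsCompact s) (n : ℕ) : IsCompact (s ^ n) := by
  induction n with
  | zero => simpa only [pow_zero, ← Set.singleton_one] using isCompact_singleton
  | succ n ih => simpa only [pow_succ] using ih.mul hs

theorem Set.pow_mul_subset_biUnion_pow_succ_mul_singleton {M : Type*} [Monoid M]
    {B K t : Set M} (h : K ⊆ ⋃ x ∈ t, B * {x}) (m : ℕ) :
    B ^ m * K ⊆ ⋃ x ∈ t, B ^ (m + 1) * {x} := by
  refine (Set.mul_subset_mul_left h).trans ?_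
  simp only [Set.mul_iUnion₂, ← mul_assoc, ← pow_succ, subset_refl]

theorem IsCompact.exists_finset_subset_biUnion_mul_singleton {G : Type*} [Group G]
    [TopologicalSpace G] [ContinuousConstSMul Gᵐᵒᵖ G] {K B : Set G} (hK : IsCompact K)
    (hB : B ∈ 𝓝 (1 : G)) : ∃ t : Finset G, K ⊆ ⋃ x ∈ t, B * {x} := by
  obtain ⟨t, -, ht⟩ :=
    hK.elim_nhds_subcover (B * {·}) fun x _ => mul_singleton_mem_nhds_of_nhds_one x hB
  exact ⟨t, ht⟩

section RightInvariant

variable {G : Type*} [Group G] [MeasurableSpace G] [MeasurableMul G]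
  (μ : Measure G) [μ.IsMulRightInvariant]

theorem measure_mul_singleton (s : Set G) (x : G) : μ (s * {x}) = μ s := by
  rw [Set.mul_singleton, Set.image_mul_right, measure_preimage_mul_right]

theorem measure_biUnion_mul_singleton_le (s : Set G) (t : Finset G) :
    μ (⋃ x ∈ t, s * {x}) ≤ t.card * μ s :=
  calc μ (⋃ x ∈ t, s * {x}) ≤ ∑ x ∈ t, μ (s * {x}) := measure_biUnion_finset_le t _
    _ = t.card * μ s := by simp only [measure_mul_singleton, Finset.sum_const, nsmul_eq_mul]

end RightInvariant

theorem haar_volume_growth_general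
    {G : Type*} [Group G] [TopologicalSpace G] [IsTopologicalGroup G]
    [MeasurableSpace G] [BorelSpace G]
    -- a right Haar measure on `G`: a nonzero right-invariant regular Borel measure
    (μG : Measure G) [μG.IsMulRightInvariant]
    (A B : Set G) (hA : IsCompact A) (hB : IsCompact B) (hBnhd : B ∈ 𝓝 (1 : G))
    (k : ℕ) :
    ∃ c : ℝ≥0, 0 < c ∧ ∀ n : ℕ, 1 ≤ n → μG (B ^ (n + k - 1) * A) ≤ c * μG (B ^ n) := by
  obtain ⟨t, ht⟩ := ((hB.pow k).mul hA).exists_finset_subset_biUnion_mul_singleton hBnhd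
  refine ⟨t.card + 1, by positivity, fun n hn => ?_⟩
  obtain ⟨m, rfl⟩ := Nat.exists_eq_add_of_le' hn
  calc μG (B ^ (m + 1 + k - 1) * A) = μG (B ^ m * (B ^ k * A)) := by
        rw [← mul_assoc, ← pow_add, Nat.add_right_comm, Nat.add_sub_cancel]
    _ ≤ μG (⋃ x ∈ t, B ^ (m + 1) * {x}) :=
        measure_mono (Set.pow_mul_subset_biUnion_pow_succ_mul_singleton ht m)
    _ ≤ t.card * μG (B ^ (m + 1)) := measure_biUnion_mul_singleton_le μG _ t
    _ ≤ ((t.card + 1 : ℝ≥0) : ℝ≥0∞) * μG (B ^ (m + 1)) := by gcongr; push_cast; exact le_self_add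

theorem haar_volume_growth
    {G : Type*} [Group G] [TopologicalSpace G] [IsTopologicalGroup G]
    [LocallyCompactSpace G] [T2Space G] [MeasurableSpace G] [BorelSpace G]
    -- a right Haar measure on `G`: a nonzero right-invariant regular Borel measure
    (μG : Measure G) [μG.IsMulRightInvariant] [μG.Regular] (hμG : μG ≠ 0)
    (A B : Set G) (hA : IsCompact A) (hB : IsCompact B) (hBnhd : B ∈ 𝓝 (1 : G))
    (k : ℕ) :
    ∃ c : ℝ≥0, 0 < c ∧ ∀ n : ℕ, 1 ≤ n → μG (B ^ (n + k - 1) * A) ≤ c * μG (B ^ n) :=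
  haar_volume_growth_general μG A B hA hB hBnhd k
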